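/- Consider regular 16-run designs with one four-level factor and three two-level factors (regular 4^1 2^{3-1} designs) of resolution at least III, represented by a two-dimensional subspace U of (ZMod 2)^4 together with vectors w_1, w_2, w_3 ∈ (ZMod 2)^4 that are pairwise distinct, do not belong to U, and such that U together with w_1, w_2, w_3 spans (ZMod 2)^4. Call two such designs isomorphic if there exist g ∈ GL(4, ZMod 2) and a permutation σ of {1, 2, 3} with g(U) = U' and g(w_i) = w'_{σ(i)} for all i. Then there are exactly 3 isomorphism classes of such designs. -/

import Mathlib

/-!
Modulo `U`, the two-level vectors `w i` are nonzero vectors of the plane `V ⧸ U ≅ 𝔽₂²`, which has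
only three nonzero vectors. Either two of them agree modulo `U`, so that their sum is a nonzero
vector of `U`, or they are the three nonzero vectors of `V ⧸ U`, whose sum is zero, so that
`s = w 0 + w 1 + w 2` lies in `U`; in the latter case `s = 0` or `s ≠ 0`. In each of the three
cases a basis of `V` adapted to these vectors is sent to the standard basis, which moves the design
onto a fixed representative. The classes are told apart by whether `s = 0` and whether `s ∈ U`,
and both are preserved by isomorphisms since `g` carries `s` to `s'`.
-/

/-- A regular 16-run design with one four-level factor and `n` two-level factors
(a regular `4^1 2^{n-p}` design) of resolution at least III: a two-dimensional subspace
`U` of `(ZMod 2)^4` together with pairwise distinct vectors `w i ∉ U` such that `U` and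
the `w i` together span `(ZMod 2)^4`. -/
def FTLDesign (n : ℕ) : Type :=
  {Uw : Submodule (ZMod 2) (Fin 4 → ZMod 2) × (Fin n → Fin 4 → ZMod 2) //
    Module.finrank (ZMod 2) Uw.1 = 2 ∧
      Function.Injective Uw.2 ∧ (∀ i, Uw.2 i ∉ Uw.1) ∧
      Uw.1 ⊔ Submodule.span (ZMod 2) (Set.range Uw.2) = ⊤}

/-- Isomorphism of regular `4^1 2^{n-p}` designs: a linear automorphism `g` of
`(ZMod 2)^4` with `g (U) = U'` together with a permutation `σ` of the two-level factors
with `g (w i) = w' (σ i)` for all `i`. -/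
def FTLDesignIso {n : ℕ} (D D' : FTLDesign n) : Prop :=
  ∃ (g : (Fin 4 → ZMod 2) ≃ₗ[ZMod 2] (Fin 4 → ZMod 2)) (σ : Equiv.Perm (Fin n)),
    Submodule.map g.toLinearMap D.1.1 = D'.1.1 ∧ ∀ i, g (D.1.2 i) = D'.1.2 (σ i)

open Submodule Module

theorem Submodule.exists_eq_span_pair_of_finrank_eq_two {K W : Type*} [Field K] [AddCommGroup W]
    [Module K W] {U : Submodule K W} (hU : finrank K U = 2) {x : W} (hx : x ∈ U) (hx0 : x ≠ 0) :
    ∃ y ∈ U, U = span K {x, y} := by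
  have := Module.finite_of_finrank_eq_succ hU
  have hlt : K ∙ x < U := by
    refine lt_of_le_of_ne ((span_singleton_le_iff_mem x U).2 hx) fun h => ?_
    have := finrank_span_singleton (K := K) hx0
    rw [h, hU] at this
    exact absurd this (by norm_num)
  obtain ⟨y, hyU, hyx⟩ := SetLike.exists_of_lt hlt
  have hli : LinearIndependent K ![x, y] :=
    (LinearIndependent.pair_iff' hx0).2 fun a h =>
      hyx (h ▸ smul_mem _ a (mem_span_singleton_self x))
  refine ⟨y, hyU, (eq_of_le_of_finrank_eq (span_le.2 ?_) ?_).symm⟩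
  · rintro z (rfl | rfl | _) <;> assumption
  · rw [hU, ← Matrix.range_cons_cons_empty, finrank_span_eq_card hli, Fintype.card_fin]

theorem ZMod.eq_zero_or_eq_one_of_two (a : ZMod 2) : a = 0 ∨ a = 1 := by
  revert a; decide

theorem ZModModule.sum_eq_zero_of_finrank_eq_two {W : Type*} [AddCommGroup W]
    [Module (ZMod 2) W] (hW : finrank (ZMod 2) W = 2) {f : Fin 3 → W} (hf : Function.Injective f)
    (hf0 : ∀ i, f i ≠ 0) : ∑ i, f i = 0 := by
  have := Module.finite_of_finrank_eq_succ hW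
  have hli : LinearIndependent (ZMod 2) ![f 0, f 1] := by
    refine (LinearIndependent.pair_iff' (hf0 0)).2 fun a h => ?_
    rcases a.eq_zero_or_eq_one_of_two with rfl | rfl
    · exact hf0 1 (by simpa using h.symm)
    · exact hf.ne (by decide : (0 : Fin 3) ≠ 1) (by simpa using h)
  have hspan : span (ZMod 2) {f 0, f 1} = ⊤ := by
    rw [← Matrix.range_cons_cons_empty]
    exact hli.span_eq_top_of_card_eq_finrank' (by simp [hW])
  obtain ⟨s, t, hst⟩ := mem_span_pair.1 (hspan ▸ mem_top : f 2 ∈ span (ZMod 2) {f 0, f 1})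
  rw [Fin.sum_univ_three, ← hst]
  rcases s.eq_zero_or_eq_one_of_two with rfl | rfl <;>
    rcases t.eq_zero_or_eq_one_of_two with rfl | rfl <;>
    simp only [zero_smul, one_smul, add_zero, zero_add] at hst ⊢
  · exact absurd hst.symm (hf0 2)
  · exact absurd hst (hf.ne (by decide))
  · exact absurd hst (hf.ne (by decide))
  · exact ZModModule.add_self _

namespace FTLDesign

def e (i : Fin 4) : Fin 4 → ZMod 2 := Pi.single i 1

def stdPlane : Submodule (ZMod 2) (Fin 4 → ZMod 2) := span (ZMod 2) {e 0, e 1}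

theorem mem_stdPlane_iff {x : Fin 4 → ZMod 2} : x ∈ stdPlane ↔ x 2 = 0 ∧ x 3 = 0 := by
  refine ⟨fun h => ?_, fun ⟨h2, h3⟩ => mem_span_pair.2 ⟨x 0, x 1, ?_⟩⟩
  · obtain ⟨a, b, rfl⟩ := mem_span_pair.1 h
    simp [e]
  · funext j
    fin_cases j <;> simp [e, h2, h3]

theorem finrank_stdPlane : finrank (ZMod 2) stdPlane = 2 := by
  have hli : LinearIndependent (ZMod 2) ![e 0, e 1] :=
    (LinearIndependent.pair_iff' (by decide)).2 fun a h => by simpa [e] using congrFun h 1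
  rw [stdPlane, ← Matrix.range_cons_cons_empty, finrank_span_eq_card hli, Fintype.card_fin]

theorem stdPlane_sup_span_eq_top {s : Set (Fin 4 → ZMod 2)} (h2 : e 2 ∈ span (ZMod 2) s)
    (h3 : e 3 ∈ span (ZMod 2) s) : stdPlane ⊔ span (ZMod 2) s = ⊤ := by
  refine eq_top_iff.2 ((Pi.basisFun (ZMod 2) (Fin 4)).span_eq ▸ span_le.2 ?_)
  rintro _ ⟨i, rfl⟩
  rw [Pi.basisFun_apply]
  fin_cases i
  · exact mem_sup_left (subset_span (by simp [e]))
  · exact mem_sup_left (subset_span (by simp [e]))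
  · exact mem_sup_right h2
  · exact mem_sup_right h3

def stdDesign (w : Fin 3 → Fin 4 → ZMod 2) (hw : Function.Injective w)
    (hw23 : ∀ i, ¬(w i 2 = 0 ∧ w i 3 = 0)) (h2 : e 2 ∈ span (ZMod 2) (Set.range w))
    (h3 : e 3 ∈ span (ZMod 2) (Set.range w)) : FTLDesign 3 :=
  ⟨(stdPlane, w), finrank_stdPlane, hw, fun i h => hw23 i (mem_stdPlane_iff.1 h),
    stdPlane_sup_span_eq_top h2 h3⟩

def sumZeroRep : FTLDesign 3 :=
  stdDesign ![e 2, e 3, e 2 + e 3] (by decide) (by decide) (subset_span ⟨0, rfl⟩)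
    (subset_span ⟨1, rfl⟩)

def sumInPlaneRep : FTLDesign 3 :=
  stdDesign ![e 2, e 3, e 0 + e 2 + e 3] (by decide) (by decide) (subset_span ⟨0, rfl⟩)
    (subset_span ⟨1, rfl⟩)

def pairInPlaneRep : FTLDesign 3 :=
  stdDesign ![e 2, e 0 + e 2, e 3] (by decide) (by decide) (subset_span ⟨0, rfl⟩)
    (subset_span ⟨2, rfl⟩)

def isoClassReps : Fin 3 → FTLDesign 3 := ![sumZeroRep, sumInPlaneRep, pairInPlaneRep]

def sumInvariant {n : ℕ} (D : FTLDesign n) : Prop × Prop :=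
  (∑ i, D.1.2 i = 0, ∑ i, D.1.2 i ∈ D.1.1)

theorem sumInvariant_comp_isoClassReps_injective :
    Function.Injective (sumInvariant ∘ isoClassReps) := by
  intro j k h
  fin_cases j <;> fin_cases k <;>
    simp +decide [isoClassReps, sumInvariant, sumZeroRep, sumInPlaneRep, pairInPlaneRep,
      stdDesign, Fin.sum_univ_three, mem_stdPlane_iff] at h ⊢

theorem sum_mem_of_forall_add_notMem (D : FTLDesign 3)
    (h : ∀ τ : Equiv.Perm (Fin 3), D.1.2 (τ 0) + D.1.2 (τ 1) ∉ D.1.1) :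
    ∑ i, D.1.2 i ∈ D.1.1 := by
  have hQ : finrank (ZMod 2) ((Fin 4 → ZMod 2) ⧸ D.1.1) = 2 := by
    have := D.1.1.finrank_quotient_add_finrank
    rw [D.2.1, finrank_fin_fun] at this
    omega
  rw [← Quotient.mk_eq_zero, ← mkQ_apply, map_sum]
  refine ZModModule.sum_eq_zero_of_finrank_eq_two hQ (fun i j hij => ?_) fun i => by
    simpa using D.2.2.2.1 i
  by_contra hne
  have hτ : ∀ i j : Fin 3, i ≠ j → ∃ τ : Equiv.Perm (Fin 3), τ 0 = i ∧ τ 1 = j := by decide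
  obtain ⟨τ, rfl, rfl⟩ := hτ i j hne
  rw [mkQ_apply, mkQ_apply, Submodule.Quotient.eq, ZModModule.sub_eq_add] at hij
  exact h τ hij

end FTLDesign

namespace FTLDesignIso

open FTLDesign

theorem sumInvariant_eq {n : ℕ} {D D' : FTLDesign n} (h : FTLDesignIso D D') :
    sumInvariant D = sumInvariant D' := by
  obtain ⟨g, σ, hU, hw⟩ := h
  have hsum : g (∑ i, D.1.2 i) = (∑ i, D'.1.2 i : Fin 4 → ZMod 2) := by
    simp only [map_sum, hw]
    exact Equiv.sum_comp σ _
  rw [sumInvariant, sumInvariant, ← hsum, ← hU, g.map_eq_zero_iff, mem_map_equiv,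
    g.symm_apply_apply]

theorem of_coords {n : ℕ} {D R : FTLDesign n} (v : Fin 4 → Fin 4 → ZMod 2)
    (τ : Equiv.Perm (Fin n)) (hU : D.1.1 = span (ZMod 2) {v 0, v 1}) (hR : R.1.1 = stdPlane)
    (hw : ∀ l, D.1.2 (τ l) = ∑ j, R.1.2 l j • v j) : FTLDesignIso D R := by
  have hspan : ⊤ ≤ span (ZMod 2) (Set.range v) := by
    rw [← D.2.2.2.2]
    refine sup_le (hU ▸ span_mono ?_) (span_le.2 ?_)
    · rintro _ (rfl | rfl) <;> exact ⟨_, rfl⟩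
    · rintro _ ⟨i, rfl⟩
      rw [← τ.apply_symm_apply i, hw]
      exact sum_mem fun j _ => smul_mem _ _ (subset_span ⟨j, rfl⟩)
  let B := basisOfTopLeSpanOfCardEqFinrank v hspan (by simp)
  have hB : ⇑B = v := coe_basisOfTopLeSpanOfCardEqFinrank _ _ _
  have hBe : ∀ i, B.equivFun (v i) = e i := fun i => by
    funext j
    simp [← hB, e, Pi.single_apply, eq_comm]
  refine ⟨B.equivFun, τ.symm, ?_, fun i => ?_⟩
  · rw [hU, hR, map_span, Set.image_pair]
    simp only [LinearEquiv.coe_coe, hBe, stdPlane]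
  · obtain ⟨l, rfl⟩ := τ.surjective i
    rw [hw, τ.symm_apply_apply, ← hB, ← B.equivFun_symm_apply, B.equivFun.apply_symm_apply]

theorem pairInPlaneRep_of_add_mem {D : FTLDesign 3} (τ : Equiv.Perm (Fin 3))
    (h : D.1.2 (τ 0) + D.1.2 (τ 1) ∈ D.1.1) : FTLDesignIso D pairInPlaneRep := by
  have hu : D.1.2 (τ 0) + D.1.2 (τ 1) ≠ 0 := by
    rw [Ne, ← ZModModule.sub_eq_add, sub_eq_zero]
    exact D.2.2.1.ne (τ.injective.ne (by decide))
  obtain ⟨y, -, hUy⟩ := exists_eq_span_pair_of_finrank_eq_two D.2.1 h hu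
  refine of_coords ![_, y, D.1.2 (τ 0), D.1.2 (τ 2)] τ hUy rfl fun l => ?_
  fin_cases l <;> simp [pairInPlaneRep, stdDesign, Fin.sum_univ_four, e]
  grind

theorem sumZeroRep_of_sum_eq_zero {D : FTLDesign 3} (h : ∑ i, D.1.2 i = 0) :
    FTLDesignIso D sumZeroRep := by
  obtain ⟨x, hxU, hx0⟩ := exists_mem_ne_zero_of_ne_bot (p := D.1.1)
    (one_le_finrank_iff.1 (by rw [D.2.1]; norm_num))
  obtain ⟨y, -, hUxy⟩ := exists_eq_span_pair_of_finrank_eq_two D.2.1 hxU hx0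
  refine of_coords ![x, y, D.1.2 0, D.1.2 1] 1 hUxy rfl fun l => ?_
  fin_cases l <;> simp [sumZeroRep, stdDesign, Fin.sum_univ_four, e]
  rw [Fin.sum_univ_three] at h
  grind

theorem sumInPlaneRep_of_sum_mem {D : FTLDesign 3} (hs : ∑ i, D.1.2 i ∈ D.1.1)
    (h0 : ∑ i, D.1.2 i ≠ 0) : FTLDesignIso D sumInPlaneRep := by
  obtain ⟨y, -, hUy⟩ := exists_eq_span_pair_of_finrank_eq_two D.2.1 hs h0
  refine of_coords ![_, y, D.1.2 0, D.1.2 1] 1 hUy rfl fun l => ?_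
  fin_cases l <;> simp [sumInPlaneRep, stdDesign, Fin.sum_univ_four, e]
  grind

end FTLDesignIso

open FTLDesign

theorem exists_iso_isoClassReps (D : FTLDesign 3) : ∃ j, FTLDesignIso D (isoClassReps j) := by
  by_cases hpair : ∃ τ : Equiv.Perm (Fin 3), D.1.2 (τ 0) + D.1.2 (τ 1) ∈ D.1.1
  · obtain ⟨τ, hτ⟩ := hpair
    exact ⟨2, .pairInPlaneRep_of_add_mem τ hτ⟩
  have hsum := D.sum_mem_of_forall_add_notMem (by simpa using hpair)
  by_cases h0 : ∑ i, D.1.2 i = 0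
  · exact ⟨0, .sumZeroRep_of_sum_eq_zero h0⟩
  · exact ⟨1, .sumInPlaneRep_of_sum_mem hsum h0⟩

/-- There are exactly 3 isomorphism classes of regular 16-run `4^1 2^{3-1}` designs of
resolution at least III: there are 3 designs such that every design is isomorphic to
exactly one of them. -/
theorem three_isoClasses_of_four_one_two_three :
    ∃ reps : Fin 3 → FTLDesign 3,
      ∀ D : FTLDesign 3, ∃! j : Fin 3, FTLDesignIso D (reps j) := by
  refine ⟨isoClassReps, fun D => ?_⟩
  obtain ⟨j, hj⟩ := exists_iso_isoClassReps D
  exact ⟨j, hj, fun k hk =>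
    sumInvariant_comp_isoClassReps_injective (hk.sumInvariant_eq.symm.trans hj.sumInvariant_eq)⟩
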